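/- arXiv:1709.08910 — 3 statements merged into one kernel-verified Lean document; each statement's English description precedes it below -/
import Mathlib

section
/- Let D ⊆ Ω_m^k with n nodes and indicator coefficients b_α, let λ be a measure on ℂ^k with finite moments, and let S ⊆ {z^α : α ∈ ℤ_m^k} be a monomial set with invertible evaluation matrix X_{D,S}. Define A = { z^α : α ∈ ℤ_{≥0}^k, ∫ z^α dλ = (m^k/n) b_{\bar α} }. Then the unique weight vector w_S making the cubature rule exact on Span(S) equals the constant vector (1/n,...,1/n) if and only if S ⊆ A. -/
/-!
Weights `1/n` solve `Xᵀ w = (∫ z^α dλ)_α` exactly when every moment equals the node average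
`(1/n) ∑_d d^α`. Since the exponents lie in `{0, …, m - 1}`, reflecting them twice modulo `m` gives
them back, so this average is `(m^k/n) b_ᾱ`.
-/

open MeasureTheory Matrix

/-- The monomial `z^α = ∏ i, z i ^ α i` as a function on `ℂ^k`. -/
noncomputable def mono {k : ℕ} (a : Fin k → ℕ) (z : Fin k → ℂ) : ℂ := ∏ i, z i ^ a i

/-- The paper's `ᾱ`, one coordinate at a time: the representative of `-a` in `{0, …, m - 1}`. -/
def negMod (m a : ℕ) : ℕ := (m - a % m) % m

theorem negMod_negMod {m : ℕ} (hm : 0 < m) (a : ℕ) : negMod m (negMod m a) = a % m := by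
  have hr : a % m < m := Nat.mod_lt a hm
  unfold negMod
  rcases Nat.eq_zero_or_pos (a % m) with hzero | hpos
  · simp [hzero]
  · have hsub : (m - a % m) % m = m - a % m := Nat.mod_eq_of_lt (by omega)
    rw [hsub, hsub, Nat.sub_sub_self hr.le, Nat.mod_eq_of_lt hr]

theorem Matrix.inv_mulVec_eq_iff {ι R : Type*} [Fintype ι] [DecidableEq ι] [CommRing R]
    {A : Matrix ι ι R} (hA : IsUnit A.det) {u v : ι → R} :
    A⁻¹ *ᵥ u = v ↔ u = A *ᵥ v := by
  constructor
  · rintro rfl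
    rw [mulVec_mulVec, mul_nonsing_inv _ hA, one_mulVec]
  · rintro rfl
    rw [mulVec_mulVec, nonsing_inv_mul _ hA, one_mulVec]

theorem Matrix.transpose_mulVec_const_apply {ι R : Type*} [Fintype ι] [CommSemiring R]
    (A : Matrix ι ι R) (c : R) (j : ι) :
    (Aᵀ *ᵥ fun _ => c) j = (∑ i, A i j) * c := by
  simp only [mulVec, dotProduct, transpose_apply, Finset.sum_mul]

theorem mono_negMod_negMod {k m : ℕ} (hm : 0 < m) {a : Fin k → ℕ} (ha : ∀ l, a l < m) :
    mono (fun l => negMod m (negMod m (a l))) = mono a := by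
  simp only [negMod_negMod hm, Nat.mod_eq_of_lt (ha _)]

theorem equal_weights_iff_subset_A_general {k n : ℕ} (m : ℕ) (hm : 0 < m)
    (d : Fin n → (Fin k → ℂ))
    (b : (Fin k → ℕ) → ℂ)
    (hb : ∀ β : Fin k → ℕ,
      b β = (1 / (m : ℂ) ^ k) * ∑ i, mono (fun l => (m - β l % m) % m) (d i))
    (S : Fin n → (Fin k → ℕ)) (hSm : ∀ j l, S j l < m)
    (lam : Measure (Fin k → ℂ))
    (X : Matrix (Fin n) (Fin n) ℂ)
    (hX : X = Matrix.of fun i j => mono (S j) (d i))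
    (hinv : IsUnit X.det) :
    (X.transpose⁻¹ *ᵥ (fun j => ∫ z, mono (S j) z ∂lam)) = (fun _ => 1 / (n : ℂ)) ↔
      ∀ j, ∫ z, mono (S j) z ∂lam =
        ((m : ℂ) ^ k / (n : ℂ)) * b (fun l => (m - S j l % m) % m) := by
  rw [inv_mulVec_eq_iff (by rwa [det_transpose]), funext_iff]
  refine forall_congr' fun j => ?_
  have hmk : (m : ℂ) ^ k ≠ 0 := pow_ne_zero _ (Nat.cast_ne_zero.mpr hm.ne')
  have hb_bar : b (fun l => negMod m (S j l)) = (1 / (m : ℂ) ^ k) * ∑ i, mono (S j) (d i) := by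
    rw [hb, ← mono_negMod_negMod hm (hSm j)]
    rfl
  change _ ↔ _ = _ * b (fun l => negMod m (S j l))
  rw [hb_bar, transpose_mulVec_const_apply, hX]
  simp only [of_apply]
  field_simp

/-- the interpolatory cubature rule has all weights equal to `1/n`
if and only if every monomial of `S` belongs to
`A = { z^α : ∫ z^α dλ = (m^k/n) b_{\bar α} }`. -/
theorem equal_weights_iff_subset_A {k n : ℕ} (m : ℕ) (hm : 0 < m) (hn : 0 < n)
    (d : Fin n → (Fin k → ℂ)) (hdinj : Function.Injective d)
    (hd : ∀ i l, d i l ^ m = 1)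
    (b : (Fin k → ℕ) → ℂ)
    (hb : ∀ β : Fin k → ℕ,
      b β = (1 / (m : ℂ) ^ k) * ∑ i, mono (fun l => (m - β l % m) % m) (d i))
    (S : Fin n → (Fin k → ℕ)) (hSm : ∀ j l, S j l < m)
    (lam : Measure (Fin k → ℂ))
    (hint : ∀ j, Integrable (fun z => mono (S j) z) lam)
    (X : Matrix (Fin n) (Fin n) ℂ)
    (hX : X = Matrix.of fun i j => mono (S j) (d i))
    (hinv : IsUnit X.det) :
    (X.transpose⁻¹ *ᵥ (fun j => ∫ z, mono (S j) z ∂lam)) = (fun _ => 1 / (n : ℂ)) ↔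
      ∀ j, ∫ z, mono (S j) z ∂lam =
        ((m : ℂ) ^ k / (n : ℂ)) * b (fun l => (m - S j l % m) % m) :=
  equal_weights_iff_subset_A_general m hm d b hb S hSm lam X hX hinv
end

section
/- Let ν be a zero-mean complex Gaussian measure on ℂ^k, so ∫ z^α dν = 0 for α ≠ 0 and ∫ 1 dν = 1. Let D ⊆ Ω_m^k with n nodes, indicator function f with support Supp(f) = {z^α : α ∈ ℤ_m^k, b_α ≠ 0}, and let S ⊆ {z^α : α ∈ ℤ_m^k} be a monomial set containing 1 with invertible evaluation matrix X_{D,S}. Then the weights w_S are all equal to 1/n if and only if S ∩ Supp(f) = {1}. -/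
open MeasureTheory Matrix

lemma dvd_sub_mod_mod_add {m : ℕ} (hm : 0 < m) (s : ℕ) : m ∣ (m - s % m) % m + s := by
  rw [← ZMod.natCast_eq_zero_iff]
  push_cast [ZMod.natCast_mod, Nat.cast_sub (Nat.mod_lt s hm).le]
  simp

lemma pow_sub_mod_mod_eq_star_pow {z : ℂ} {m : ℕ} (hm : 0 < m) (hz : z ^ m = 1) (s : ℕ) :
    z ^ ((m - s % m) % m) = star (z ^ s) := by
  have hinv : z ^ ((m - s % m) % m) * z ^ s = 1 := by
    obtain ⟨c, hc⟩ := dvd_sub_mod_mod_add hm s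
    rw [← pow_add, hc, pow_mul, hz, one_pow]
  have hnorm : ‖z ^ s‖ = 1 := by
    rw [norm_pow, Complex.norm_eq_one_of_pow_eq_one hz hm.ne', one_pow]
  rw [eq_inv_of_mul_eq_one_left hinv, Complex.inv_eq_conj hnorm, Complex.star_def]

lemma mono_sub_mod_mod_eq_star {k m : ℕ} (hm : 0 < m) {z : Fin k → ℂ} (hz : ∀ l, z l ^ m = 1)
    (β : Fin k → ℕ) : mono (fun l => (m - β l % m) % m) z = star (mono β z) := by
  simp only [mono, star_prod]
  exact Finset.prod_congr rfl fun l _ => pow_sub_mod_mod_eq_star_pow hm (hz l) (β l)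

lemma integral_mono_eq_ite {k : ℕ} {ν : Measure (Fin k → ℂ)}
    (hν0 : ∀ α : Fin k → ℕ, α ≠ 0 → ∫ z, mono α z ∂ν = 0)
    (hν1 : ∫ z, mono (0 : Fin k → ℕ) z ∂ν = 1) (α : Fin k → ℕ) :
    ∫ z, mono α z ∂ν = if α = 0 then 1 else 0 := by
  split_ifs with h
  · rw [h, hν1]
  · exact hν0 α h

namespace Matrix

variable {ι R : Type*} [Fintype ι] [CommRing R]

lemma inv_mulVec_eq_iff_s12 [DecidableEq ι] {A : Matrix ι ι R} (hA : IsUnit A.det) {u v : ι → R} :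
    A⁻¹ *ᵥ u = v ↔ u = A *ᵥ v := by
  constructor <;> rintro rfl
  · rw [mulVec_mulVec, mul_nonsing_inv _ hA, one_mulVec]
  · rw [mulVec_mulVec, nonsing_inv_mul _ hA, one_mulVec]

lemma transpose_mulVec_const_apply_s12 (A : Matrix ι ι R) (c : R) (j : ι) :
    (Aᵀ *ᵥ fun _ => c) j = (∑ i, A i j) * c := by
  simp [mulVec, dotProduct, Finset.sum_mul]

end Matrix

theorem gaussian_equal_weights_iff_support_general {k n : ℕ} (m : ℕ) (hm : 0 < m)
    (d : Fin n → (Fin k → ℂ))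
    (hd : ∀ i l, d i l ^ m = 1)
    (b : (Fin k → ℕ) → ℂ)
    (hb : ∀ β : Fin k → ℕ,
      b β = (1 / (m : ℂ) ^ k) * ∑ i, mono (fun l => (m - β l % m) % m) (d i))
    (S : Fin n → (Fin k → ℕ))
    (ν : Measure (Fin k → ℂ))
    (hν0 : ∀ α : Fin k → ℕ, α ≠ 0 → ∫ z, mono α z ∂ν = 0)
    (hν1 : ∫ z, mono (0 : Fin k → ℕ) z ∂ν = 1)
    (X : Matrix (Fin n) (Fin n) ℂ)
    (hX : X = Matrix.of fun i j => mono (S j) (d i))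
    (hinv : IsUnit X.det) :
    (X.transpose⁻¹ *ᵥ (fun j => ∫ z, mono (S j) z ∂ν)) = (fun _ => 1 / (n : ℂ)) ↔
      ∀ j, b (S j) ≠ 0 → S j = 0 := by
  have hb_ne_zero : ∀ β, b β ≠ 0 ↔ ∑ i, mono β (d i) ≠ 0 := fun β => by
    have hm' : (m : ℂ) ≠ 0 := Nat.cast_ne_zero.mpr hm.ne'
    rw [hb, Finset.sum_congr rfl fun i _ => mono_sub_mod_mod_eq_star hm (hd i) β, ← star_sum,
      mul_ne_zero_iff, star_ne_zero]
    simp [hm']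
  rw [inv_mulVec_eq_iff_s12 (by rwa [det_transpose]), funext_iff]
  simp only [integral_mono_eq_ite hν0 hν1, transpose_mulVec_const_apply_s12, hX, of_apply]
  refine forall_congr' fun j => ?_
  have hn : (n : ℂ) ≠ 0 := Nat.cast_ne_zero.mpr j.pos.ne'
  by_cases hSj : S j = 0
  · simp [hSj, mono, hn]
  · simp [hSj, hn, hb_ne_zero, eq_comm]

/-- for a Gaussian-type measure `ν` (`∫ z^α dν = 0` for `α ≠ 0`,
`∫ 1 dν = 1`), the cubature weights are all equal to `1/n` if and only if
`S ∩ Supp(f) = {1}`, i.e. the only exponent of `S` at which the indicator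
coefficient is nonzero is `0`. -/
theorem gaussian_equal_weights_iff_support {k n : ℕ} (m : ℕ) (hm : 0 < m) (hn : 0 < n)
    (d : Fin n → (Fin k → ℂ)) (hdinj : Function.Injective d)
    (hd : ∀ i l, d i l ^ m = 1)
    (b : (Fin k → ℕ) → ℂ)
    (hb : ∀ β : Fin k → ℕ,
      b β = (1 / (m : ℂ) ^ k) * ∑ i, mono (fun l => (m - β l % m) % m) (d i))
    (S : Fin n → (Fin k → ℕ)) (hSm : ∀ j l, S j l < m)
    (j0 : Fin n) (hj0 : S j0 = 0)
    (ν : Measure (Fin k → ℂ))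
    (hint : ∀ j, Integrable (fun z => mono (S j) z) ν)
    (hν0 : ∀ α : Fin k → ℕ, α ≠ 0 → ∫ z, mono α z ∂ν = 0)
    (hν1 : ∫ z, mono (0 : Fin k → ℕ) z ∂ν = 1)
    (X : Matrix (Fin n) (Fin n) ℂ)
    (hX : X = Matrix.of fun i j => mono (S j) (d i))
    (hinv : IsUnit X.det) :
    (X.transpose⁻¹ *ᵥ (fun j => ∫ z, mono (S j) z ∂ν)) = (fun _ => 1 / (n : ℂ)) ↔
      ∀ j, b (S j) ≠ 0 → S j = 0 :=
  gaussian_equal_weights_iff_support_general m hm d hd b hb S ν hν0 hν1 X hX hinv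
end

section
/- Under the Gaussian measure ν (∫ z^α dν = 0 for α ≠ 0, ∫1 dν = 1), if D ⊆ Ω_m^k with n nodes admits equal weights w = (1/n,...,1/n) for some correct monomial basis S, then the precision basis of (D, w) is {1} ∪ { z^α : α ∈ ℤ_{≥0}^k \ {0}, z^{[α]_m} ∉ Supp(f) }, where f is the indicator function of D. -/
/-!
The nodes have coordinates that are `m`-th roots of unity, so complex conjugation sends
`z^α(d)` to `z^{ᾱ}(d)` with `ᾱ = (m - [α]_m) mod m`. Hence `m^k b_{[α]_m}` is the conjugate of
`∑_{d ∈ D} z^α(d)`, and for `α ≠ 0` the exactness condition `0 = (1/n) ∑_{d ∈ D} z^α(d)` holds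
exactly when `b_{[α]_m} = 0`; for `α = 0` both sides hold trivially.
-/

open MeasureTheory Matrix

open ComplexConjugate

lemma mono_zero {k : ℕ} (z : Fin k → ℂ) : mono 0 z = 1 := by
  simp [mono]

lemma pow_sub_mod_mul_pow_eq_one {M : Type*} [Monoid M] {ζ : M} {m : ℕ} (hm : 0 < m)
    (hζ : ζ ^ m = 1) (a : ℕ) : ζ ^ ((m - a % m) % m) * ζ ^ a = 1 := by
  rw [pow_eq_pow_mod a hζ, ← pow_add, pow_eq_pow_mod _ hζ, Nat.mod_add_mod,
    Nat.sub_add_cancel (Nat.mod_lt a hm).le, Nat.mod_self, pow_zero]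

lemma conj_pow_of_pow_eq_one {ζ : ℂ} {m : ℕ} (hm : 0 < m) (hζ : ζ ^ m = 1) (a : ℕ) :
    conj (ζ ^ a) = ζ ^ ((m - a % m) % m) := by
  have hnorm : ‖ζ ^ a‖ = 1 := by
    rw [norm_pow, Complex.norm_eq_one_of_pow_eq_one hζ hm.ne', one_pow]
  rw [← Complex.inv_eq_conj hnorm]
  exact inv_eq_of_mul_eq_one_left (pow_sub_mod_mul_pow_eq_one hm hζ a)

lemma conj_mono_of_pow_eq_one {k m : ℕ} (hm : 0 < m) {z : Fin k → ℂ} (hz : ∀ l, z l ^ m = 1)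
    (β : Fin k → ℕ) : conj (mono β z) = mono (fun l => (m - β l % m) % m) z := by
  simp only [mono, map_prod, conj_pow_of_pow_eq_one hm (hz _)]

lemma conj_sum_mono_of_pow_eq_one {ι : Type*} [Fintype ι] {k m : ℕ} (hm : 0 < m)
    {d : ι → Fin k → ℂ} (hd : ∀ i l, d i l ^ m = 1) (β : Fin k → ℕ) :
    conj (∑ i, mono β (d i)) = ∑ i, mono (fun l => (m - β l % m) % m) (d i) := by
  simp only [map_sum, conj_mono_of_pow_eq_one hm (hd _)]

theorem gaussian_precision_basis_general {k n : ℕ} (m : ℕ) (hm : 0 < m) (hn : 0 < n)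
    (d : Fin n → (Fin k → ℂ))
    (hd : ∀ i l, d i l ^ m = 1)
    (b : (Fin k → ℕ) → ℂ)
    (hb : ∀ β : Fin k → ℕ,
      b β = (1 / (m : ℂ) ^ k) * ∑ i, mono (fun l => (m - β l % m) % m) (d i))
    (ν : Measure (Fin k → ℂ))
    (hν0 : ∀ α : Fin k → ℕ, α ≠ 0 → ∫ z, mono α z ∂ν = 0)
    (hν1 : ∫ z, mono (0 : Fin k → ℕ) z ∂ν = 1) :
    ∀ α : Fin k → ℕ,
      (∫ z, mono α z ∂ν = (1 / (n : ℂ)) * ∑ i, mono α (d i)) ↔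
      (α = 0 ∨ b (fun l => α l % m) = 0) := by
  intro α
  have hb_mod : b (fun l => α l % m) = (1 / (m : ℂ) ^ k) * conj (∑ i, mono α (d i)) := by
    simp only [hb, Nat.mod_mod, conj_sum_mono_of_pow_eq_one hm hd]
  rcases eq_or_ne α 0 with rfl | hα
  · rw [hν1]
    simp [mono_zero, hn.ne']
  · rw [hν0 α hα, hb_mod, mul_eq_zero, map_eq_zero, eq_comm, mul_eq_zero]
    simp [hm.ne', hn.ne', hα]

/-- for a Gaussian-type measure `ν`, if a correct monomial basis `S`
yields equal weights `1/n`, then the precision basis of `(D, (1/n,...,1/n))` is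
`{1} ∪ { z^α : α ≠ 0, z^{[α]_m} ∉ Supp(f) }`. -/
theorem gaussian_precision_basis {k n : ℕ} (m : ℕ) (hm : 0 < m) (hn : 0 < n)
    (d : Fin n → (Fin k → ℂ)) (hdinj : Function.Injective d)
    (hd : ∀ i l, d i l ^ m = 1)
    (b : (Fin k → ℕ) → ℂ)
    (hb : ∀ β : Fin k → ℕ,
      b β = (1 / (m : ℂ) ^ k) * ∑ i, mono (fun l => (m - β l % m) % m) (d i))
    (S : Fin n → (Fin k → ℕ)) (hSm : ∀ j l, S j l < m)
    (ν : Measure (Fin k → ℂ))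
    (hint : ∀ j, Integrable (fun z => mono (S j) z) ν)
    (hν0 : ∀ α : Fin k → ℕ, α ≠ 0 → ∫ z, mono α z ∂ν = 0)
    (hν1 : ∫ z, mono (0 : Fin k → ℕ) z ∂ν = 1)
    (X : Matrix (Fin n) (Fin n) ℂ)
    (hX : X = Matrix.of fun i j => mono (S j) (d i))
    (hinv : IsUnit X.det)
    (hw : (X.transpose⁻¹ *ᵥ (fun j => ∫ z, mono (S j) z ∂ν)) = (fun _ => 1 / (n : ℂ))) :
    ∀ α : Fin k → ℕ,
      (∫ z, mono α z ∂ν = (1 / (n : ℂ)) * ∑ i, mono α (d i)) ↔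
      (α = 0 ∨ b (fun l => α l % m) = 0) :=
  gaussian_precision_basis_general m hm hn d hd b hb ν hν0 hν1
end
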